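/- Let H be a finite simple graph and β an integer parameter. If an edge (u,v) with u ≠ v, (u,v) ∉ E(H), and deg_H(u) + deg_H(v) < β - 1 is inserted into H, then the potential Φ(H) = (β - 1/2)·∑_v deg_H(v) - ∑_{(u,v)∈E(H)}(deg_H(u)+deg_H(v)) increases by at least 1. -/

import Mathlib

open SimpleGraph Finset
open scoped Classical

/-- The degree of a vertex. -/
noncomputable def deg {V : Type*} (H : SimpleGraph V) (v : V) : ℕ :=
  (H.neighborSet v).ncard

/-- The edge-degree of an edge, as a function on `Sym2 V`. -/
noncomputable def edgeDeg {V : Type*} (H : SimpleGraph V) : Sym2 V → ℝ :=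
  Sym2.lift ⟨fun u v => (deg H u : ℝ) + (deg H v : ℝ), fun u v => by ring⟩

/-- The potential function `Φ(H) = (β - 1/2)·∑_v deg_H(v) - ∑_{(u,v)∈E(H)} (deg_H(u)+deg_H(v))`. -/
noncomputable def Phi {V : Type*} [Fintype V] (β : ℝ) (H : SimpleGraph V) : ℝ :=
  (β - 1/2) * ∑ v, (deg H v : ℝ) - ∑ e ∈ H.edgeFinset, edgeDeg H e

/-!
Double counting turns the edge sum of `Φ` into `∑_v deg(v)²`, so
`Φ(H) = ∑_v q(deg_H v)` with `q(x) = (β - 1/2)x - x²`. Inserting `uv` raises only the degrees of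
`u` and `v`, each by one, and `q(x + 1) - q(x) = β - 3/2 - 2x`; hence `Φ` grows by
`2β - 3 - 2(deg_H u + deg_H v) ≥ 1`.
-/

section Degree

variable {V : Type*} (H : SimpleGraph V) {u v : V}

lemma deg_eq_degree [Fintype V] (w : V) : deg H w = H.degree w := by
  rw [deg, SimpleGraph.degree, neighborFinset_def, Set.ncard_eq_toFinset_card']

lemma neighborSet_sup_edge_left (hne : u ≠ v) :
    (H ⊔ edge u v).neighborSet u = insert v (H.neighborSet u) := by
  ext x
  simp only [mem_neighborSet, sup_adj, edge_adj, Set.mem_insert_iff]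
  grind

lemma neighborSet_sup_edge_of_ne {w : V} (hwu : w ≠ u) (hwv : w ≠ v) :
    (H ⊔ edge u v).neighborSet w = H.neighborSet w := by
  ext x
  simp only [mem_neighborSet, sup_adj, edge_adj]
  grind

lemma deg_sup_edge_of_ne {w : V} (hwu : w ≠ u) (hwv : w ≠ v) :
    deg (H ⊔ edge u v) w = deg H w := by
  rw [deg, neighborSet_sup_edge_of_ne H hwu hwv, deg]

variable [Finite V]

lemma deg_sup_edge_left (hne : u ≠ v) (hnadj : ¬H.Adj u v) :
    deg (H ⊔ edge u v) u = deg H u + 1 := by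
  rw [deg, neighborSet_sup_edge_left H hne, Set.ncard_insert_of_notMem (show v ∉ H.neighborSet u from hnadj), deg]

lemma deg_sup_edge_right (hne : u ≠ v) (hnadj : ¬H.Adj u v) :
    deg (H ⊔ edge u v) v = deg H v + 1 := by
  rw [edge_comm]
  exact deg_sup_edge_left H hne.symm fun h ↦ hnadj h.symm

end Degree

section Potential

variable {V : Type*} [Fintype V] (H : SimpleGraph V)

lemma edgeDeg_eq_sum_mem {e : Sym2 V} (he : e ∈ H.edgeFinset) :
    edgeDeg H e = ∑ w, if w ∈ e then (deg H w : ℝ) else 0 := by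
  induction e with
  | h a b =>
    have hab : a ≠ b := (mem_edgeFinset.mp he).ne
    rw [Fintype.sum_eq_add a b hab (fun w hw ↦ by simp [hw.1, hw.2])]
    simp [edgeDeg]

lemma sum_edgeDeg_eq_sum_sq : ∑ e ∈ H.edgeFinset, edgeDeg H e = ∑ w, (deg H w : ℝ) ^ 2 := by
  rw [sum_congr rfl fun e he ↦ edgeDeg_eq_sum_mem H he, sum_comm]
  refine sum_congr rfl fun w _ ↦ ?_
  rw [sum_ite, sum_const_zero, add_zero, sum_const, ← incidenceFinset_eq_filter,
    card_incidenceFinset_eq_degree, ← deg_eq_degree, nsmul_eq_mul, sq]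

lemma Phi_eq_sum (β : ℝ) : Phi β H = ∑ w, ((β - 1/2) * deg H w - (deg H w : ℝ) ^ 2) := by
  rw [Phi, sum_edgeDeg_eq_sum_sq, mul_sum, sum_sub_distrib]

lemma Phi_sup_edge (β : ℝ) {u v : V} (hne : u ≠ v) (hnadj : ¬H.Adj u v) :
    Phi β (H ⊔ edge u v) = Phi β H + (2 * β - 3 - 2 * (deg H u + deg H v)) := by
  rw [← sub_eq_iff_eq_add', Phi_eq_sum, Phi_eq_sum, ← sum_sub_distrib,
    Fintype.sum_eq_add u v hne fun w hw ↦ by rw [deg_sup_edge_of_ne H hw.1 hw.2, sub_self],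
    deg_sup_edge_left H hne hnadj, deg_sup_edge_right H hne hnadj]
  push_cast
  ring

end Potential

/-- inserting a non-edge `(u,v)` with `deg_H(u) + deg_H(v) < β - 1`
increases the potential `Φ` by at least `1`. -/
theorem stmt3 {V : Type*} [Fintype V] (H : SimpleGraph V) (β : ℤ) (u v : V)
    (hne : u ≠ v) (hnadj : ¬ H.Adj u v)
    (hdeg : (deg H u : ℤ) + (deg H v : ℤ) < β - 1) :
    Phi (β : ℝ) H + 1 ≤ Phi (β : ℝ) (H ⊔ SimpleGraph.fromEdgeSet {s(u, v)}) := by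
  have hdeg' : (deg H u : ℝ) + deg H v ≤ β - 2 := by exact_mod_cast (by omega : _ ≤ β - 2)
  change _ ≤ Phi β (H ⊔ edge u v)
  rw [Phi_sup_edge H β hne hnadj]
  linarith
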